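/- arXiv:1702.05661 — 5 statements merged into one kernel-verified Lean document; each statement's English description precedes it below -/
import Mathlib

section
/- Let T be a topological space and I a finite index set. For each i ∈ I let X_i and Y_i be irreducible closed subsets of T such that: (a) the topological Krull dimension of X_i equals that of Y_i and is finite, for every i ∈ I; (b) Y_i is not contained in Y_j whenever i ≠ j; and (c) ⋃_{i∈I} Y_i ⊆ ⋃_{i∈I} X_i. Then there exists a bijection b : I → I such that Y_i = X_{b(i)} for all i ∈ I, and consequently ⋃_{i∈I} X_i = ⋃_{i∈I} Y_i. -/
/-!
Choose `f : I → I` with `Y i ⊆ X (f i)`, possible because `Y i` is irreducible and covered by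
finitely many closed sets. Then `dim X i = dim Y i ≤ dim X (f i)`, so the dimension is constant
along every cycle of `f`, and since a proper closed subset of an irreducible space has strictly
smaller (finite) dimension, `Y i = X (f i)` for every periodic point `i`. If `f x` is periodic, it
is also the image of a periodic `c`, whence `Y x ⊆ X (f c) = Y c` and `x = c`. So every point is
periodic, i.e. `f` is a permutation.
-/

open Set Function Order TopologicalSpace Topology

theorem Order.krullDim_add_one_le_of_strictMono_of_lt {α β : Type*} [Preorder α] [Preorder β]
    {f : α → β} (hf : StrictMono f) {b : β} (hb : ∀ a, f a < b) :
    krullDim α + 1 ≤ krullDim β := by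
  rcases isEmpty_or_nonempty α with hα | hα
  · simp [krullDim_eq_bot]
  have hheight : (⨆ a : α, height a) + 1 ≤ height b := by
    rw [ENat.iSup_add]
    exact iSup_le fun a ↦ (add_le_add_left (height_le_height_apply_of_strictMono f hf a) 1).trans
      (height_add_one_le (hb a))
  rw [krullDim_eq_iSup_height_of_nonempty]
  exact_mod_cast (WithBot.coe_le_coe.mpr hheight).trans (height_le_krullDim b)

theorem topologicalKrullDim_add_one_le_of_ssubset {T : Type*} [TopologicalSpace T]
    {A B : Set T} (hA : IsClosed A) (hB : IsIrreducible B) (hAB : A ⊂ B) :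
    topologicalKrullDim A + 1 ≤ topologicalKrullDim B := by
  have := Subtype.irreducibleSpace hB
  have hemb := IsEmbedding.inclusion hAB.subset
  refine krullDim_add_one_le_of_strictMono_of_lt
    (IrreducibleCloseds.map_strictMono_of_isInducing hemb.isInducing)
    (b := ⟨univ, IrreducibleSpace.isIrreducible_univ B, isClosed_univ⟩) fun Z ↦ ?_
  -- pushed into `B`, an irreducible closed subset of `A` stays inside the closed set `A ⊊ B`
  have hZA : (IrreducibleCloseds.map _ hemb.continuous Z : Set B) ⊆ {y | (y : T) ∈ A} :=
    closure_minimal (by rintro _ ⟨y, -, rfl⟩; exact y.2) (hA.preimage continuous_subtype_val)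
  obtain ⟨x, hxB, hxA⟩ := exists_of_ssubset hAB
  exact lt_of_le_of_ne (fun _ _ ↦ trivial) fun h ↦
    hxA (hZA (show (⟨x, hxB⟩ : B) ∈ (_ : Set B) by rw [h]; trivial))

theorem IsClosed.eq_of_subset_of_topologicalKrullDim_le {T : Type*} [TopologicalSpace T]
    {A B : Set T} {n : ℕ} (hA : IsClosed A) (hB : IsIrreducible B) (hAB : A ⊆ B)
    (hAn : topologicalKrullDim A = (n : ℕ∞)) (hBn : topologicalKrullDim B ≤ (n : ℕ∞)) :
    A = B := by
  by_contra hne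
  have h := (topologicalKrullDim_add_one_le_of_ssubset hA hB (hAB.ssubset_of_ne hne)).trans hBn
  rw [hAn] at h
  norm_cast at h
  simp at h

theorem IsIrreducible.exists_subset_of_subset_iUnion {T ι : Type*} [TopologicalSpace T] [Finite ι]
    {s : Set T} {Z : ι → Set T} (hs : IsIrreducible s) (hZ : ∀ i, IsClosed (Z i))
    (hsZ : s ⊆ ⋃ i, Z i) : ∃ i, s ⊆ Z i := by
  obtain ⟨_, hz, hsz⟩ := isIrreducible_iff_sUnion_isClosed.mp hs (finite_range Z).toFinset
    (by simpa using hZ) (by simpa using hsZ)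
  obtain ⟨i, rfl⟩ := (finite_range Z).mem_toFinset.mp hz
  exact ⟨i, hsz⟩

namespace Function

variable {α : Type*} {f : α → α}

theorem le_of_mem_periodicPts_of_le_map {β : Type*} [Preorder β] {g : α → β}
    (hg : ∀ x, g x ≤ g (f x)) {x : α} (hx : x ∈ periodicPts f) : g (f x) ≤ g x := by
  obtain ⟨n, hn, hper⟩ := mem_periodicPts.mp hx
  have hmono : Monotone fun k ↦ g (f^[k] x) :=
    monotone_nat_of_le_succ fun k ↦ by simpa only [iterate_succ_apply'] using hg (f^[k] x)
  simpa only [iterate_one, hper.eq] using hmono (Nat.one_le_iff_ne_zero.mpr hn.ne')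

theorem exists_iterate_mem_periodicPts [Finite α] (f : α → α) (x : α) :
    ∃ n, f^[n] x ∈ periodicPts f := by
  obtain ⟨m, n, hmn, heq⟩ := Finite.exists_ne_map_eq_of_infinite (f^[·] x)
  wlog hlt : m < n generalizing m n
  · exact this n m hmn.symm heq.symm (by omega)
  refine ⟨m, mk_mem_periodicPts (Nat.sub_pos_of_lt hlt) ?_⟩
  rw [IsPeriodicPt, IsFixedPt, ← iterate_add_apply, Nat.sub_add_cancel hlt.le, heq]

theorem injective_of_map_mem_periodicPts [Finite α]
    (h : ∀ x, f x ∈ periodicPts f → x ∈ periodicPts f) : Injective f := by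
  refine injective_iff_periodicPts_eq_univ.mpr (eq_univ_of_forall fun x ↦ ?_)
  obtain ⟨n, hn⟩ := exists_iterate_mem_periodicPts f x
  induction n generalizing x with
  | zero => exact hn
  | succ n ih => exact h x (ih (f x) (by rwa [← iterate_succ_apply]))

end Function

/-- Let `T` be a topological space and `I` a finite index set. For each
`i ∈ I` let `X i` and `Y i` be irreducible closed subsets of `T` such that the topological
Krull dimensions of `X i` and `Y i` agree and are finite, `Y i ⊄ Y j` for `i ≠ j`, and
`⋃ Y i ⊆ ⋃ X i`.  Then there is a bijection `b : I → I` with `Y i = X (b i)` for all `i`,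
and consequently `⋃ X i = ⋃ Y i`. -/
theorem stmt0 {T : Type*} [TopologicalSpace T] {I : Type*} [Finite I]
    (X Y : I → Set T)
    (hXcl : ∀ i, IsClosed (X i)) (hYcl : ∀ i, IsClosed (Y i))
    (hXirr : ∀ i, IsIrreducible (X i)) (hYirr : ∀ i, IsIrreducible (Y i))
    (hdim : ∀ i, ∃ n : ℕ,
      topologicalKrullDim (X i) = (n : ℕ∞) ∧ topologicalKrullDim (Y i) = (n : ℕ∞))
    (hYnsub : ∀ i j, i ≠ j → ¬ Y i ⊆ Y j)
    (hsub : (⋃ i, Y i) ⊆ ⋃ i, X i) :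
    (∃ b : I ≃ I, ∀ i, Y i = X (b i)) ∧ (⋃ i, X i) = ⋃ i, Y i := by
  choose f hf using fun i ↦
    (hYirr i).exists_subset_of_subset_iUnion hXcl ((subset_iUnion Y i).trans hsub)
  choose d hdX hdY using hdim
  have hd_le : ∀ i, d i ≤ d (f i) := fun i ↦ by
    have h := (IsEmbedding.inclusion (hf i)).isInducing.topologicalKrullDim_le
    rw [hdY i, hdX (f i)] at h
    exact_mod_cast h
  have hYX_of_mem : ∀ i ∈ periodicPts f, Y i = X (f i) := fun i hi ↦
    (hYcl i).eq_of_subset_of_topologicalKrullDim_le (hXirr (f i)) (hf i) (hdY i)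
      (by rw [hdX]; exact_mod_cast le_of_mem_periodicPts_of_le_map hd_le hi)
  have hinj : Injective f := injective_of_map_mem_periodicPts fun x hx ↦ by
    obtain ⟨c, hc, hcx⟩ := (bijOn_periodicPts (f := f)).surjOn hx
    have hxc : Y x ⊆ Y c := hYX_of_mem c hc ▸ hcx ▸ hf x
    obtain rfl : x = c := of_not_not fun hne ↦ hYnsub x c hne hxc
    exact hc
  have hYX : ∀ i, Y i = X (f i) := fun i ↦ hYX_of_mem i (hinj.mem_periodicPts i)
  have hbij := Finite.injective_iff_bijective.mp hinj
  exact ⟨⟨Equiv.ofBijective f hbij, hYX⟩, by rw [iUnion_congr hYX, hbij.surjective.iUnion_comp X]⟩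
end

section
/- Let X and X' be closed subsets of a topological space, let x be a point, and let U be an open neighborhood of x such that X ∩ U ⊆ X'. If every irreducible component of the subspace X contains x, then X ⊆ X'. -/
/-! Zorn's lemma puts every point `y ∈ X` in a maximal irreducible subset `Z` of `X`, which contains
`x` by hypothesis. Then `Z ∩ U` is a nonempty open subset of the irreducible set `Z`, hence dense
in it, and since `Z ∩ U ⊆ X'` with `X'` closed, `y ∈ Z ⊆ X'`. -/

open Set

section Irreducible

variable {T : Type*} [TopologicalSpace T]

theorem IsChain.isPreirreducible_sUnion {c : Set (Set T)} (hc : ∀ s ∈ c, IsPreirreducible s)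
    (hchain : IsChain (· ⊆ ·) c) : IsPreirreducible (⋃₀ c) := by
  rintro u v hu hv ⟨a, ha, hau⟩ ⟨b, hb, hbv⟩
  obtain ⟨p, hpc, hap⟩ := mem_sUnion.1 ha
  obtain ⟨q, hqc, hbq⟩ := mem_sUnion.1 hb
  rcases hchain.total hpc hqc with hpq | hqp
  · obtain ⟨z, hzq, hzuv⟩ := hc q hqc u v hu hv ⟨a, hpq hap, hau⟩ ⟨b, hbq, hbv⟩
    exact ⟨z, mem_sUnion_of_mem hzq hqc, hzuv⟩
  · obtain ⟨z, hzp, hzuv⟩ := hc p hpc u v hu hv ⟨a, hap, hau⟩ ⟨b, hqp hbq, hbv⟩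
    exact ⟨z, mem_sUnion_of_mem hzp hpc, hzuv⟩

theorem IsPreirreducible.exists_maximal_subset {s X : Set T} (hs : IsPreirreducible s)
    (hsX : s ⊆ X) : ∃ Z, s ⊆ Z ∧ Maximal (fun Z ↦ IsPreirreducible Z ∧ Z ⊆ X) Z :=
  zorn_subset_nonempty {Z | IsPreirreducible Z ∧ Z ⊆ X}
    (fun c hc hchain _ ↦ ⟨⋃₀ c,
      ⟨hchain.isPreirreducible_sUnion fun _ hs ↦ (hc hs).1, sUnion_subset fun _ hs ↦ (hc hs).2⟩,
      fun _ ↦ subset_sUnion_of_mem⟩)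
    s ⟨hs, hsX⟩

theorem IsPreirreducible.subset_of_inter_isOpen_subset {Z U X' : Set T} (hZ : IsPreirreducible Z)
    (hU : IsOpen U) (hZU : (Z ∩ U).Nonempty) (hX' : IsClosed X') (hsub : Z ∩ U ⊆ X') :
    Z ⊆ X' :=
  (subset_closure_inter_of_isPreirreducible_of_isOpen hZ hU hZU).trans
    (hX'.closure_subset_iff.2 hsub)

end Irreducible

theorem stmt2_general {T : Type*} [TopologicalSpace T] {X X' : Set T} {x : T} {U : Set T}
    (hX' : IsClosed X') (hU : IsOpen U) (hxU : x ∈ U)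
    (hXU : X ∩ U ⊆ X')
    (hcomp : ∀ Z : Set T, Z ⊆ X → IsIrreducible Z →
      (∀ Z' : Set T, Z' ⊆ X → IsIrreducible Z' → Z ⊆ Z' → Z = Z') → x ∈ Z) :
    X ⊆ X' := by
  intro y hy
  obtain ⟨Z, hyZ, hmax⟩ :=
    isPreirreducible_singleton.exists_maximal_subset (singleton_subset_iff.2 hy)
  have hZX : Z ⊆ X := hmax.prop.2
  have hxZ : x ∈ Z := hcomp Z hZX ⟨⟨y, hyZ rfl⟩, hmax.prop.1⟩
    fun Z' hZ'X hZ' hZZ' ↦ hmax.eq_of_subset ⟨hZ'.2, hZ'X⟩ hZZ'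
  have hZU : Z ∩ U ⊆ X' := fun z hz ↦ hXU ⟨hZX hz.1, hz.2⟩
  exact hmax.prop.1.subset_of_inter_isOpen_subset hU ⟨x, hxZ, hxU⟩ hX' hZU (hyZ rfl)

/-- Let `X`, `X'` be closed subsets of a topological space, `x` a point,
and `U` an open neighborhood of `x` with `X ∩ U ⊆ X'`.  If every irreducible component of
the subspace `X` (i.e. every maximal irreducible subset of `X`) contains `x`, then
`X ⊆ X'`. -/
theorem stmt2 {T : Type*} [TopologicalSpace T] {X X' : Set T} {x : T} {U : Set T}
    (hX : IsClosed X) (hX' : IsClosed X') (hU : IsOpen U) (hxU : x ∈ U)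
    (hXU : X ∩ U ⊆ X')
    (hcomp : ∀ Z : Set T, Z ⊆ X → IsIrreducible Z →
      (∀ Z' : Set T, Z' ⊆ X → IsIrreducible Z' → Z ⊆ Z' → Z = Z') → x ∈ Z) :
    X ⊆ X' :=
  stmt2_general hX' hU hxU hXU hcomp
end

section
/- Let n ≥ 1, let w : Fin n → ℕ be a weight function with w(i) > 0 for all i, and let I be an ideal of R = ℂ[x₁,…,xₙ] generated by w-weighted-homogeneous polynomials. Let T = ℂ[[x₁,…,xₙ]], φ : R → T the canonical inclusion, and K the ideal of T generated by φ(I). Then the quotient ring R/I is an integral domain if and only if the quotient ring T/K is an integral domain. -/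
/-!
For positive weights the weight-`e` part `f_e` of a power series `f` is a polynomial, and for an
ideal `I` generated by weighted-homogeneous polynomials, `f ∈ I·ℂ[[x]]` iff `f_e ∈ I` for all `e`.
For `⇐` pick finitely many homogeneous generators `t` (Noetherianity), write
each `f_e = ∑ c_{e,t} t`, and collect `∑_e c_{e,t}` into a power series: since the `t` are
homogeneous, the different `e` do not interact. Consequently `I·ℂ[[x]] ∩ ℂ[x] = I`, so `I` is prime
when `I·ℂ[[x]]` is. Conversely, if `f, g ∉ I·ℂ[[x]]`, take the least `i`, `j` with `f_i, g_j ∉ I`;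
then `(fg)_{i+j} ≡ f_i g_j mod I`, which is not in `I` when `I` is prime.
-/

open MvPolynomial Finset.HasAntidiagonal

theorem Ideal.IsPrime.exists_sum_antidiagonal_mul_notMem {R : Type*} [CommRing R] {P : Ideal R}
    (hP : P.IsPrime) {a b : ℕ → R} (ha : ∃ i, a i ∉ P) (hb : ∃ j, b j ∉ P) :
    ∃ e, ∑ p ∈ antidiagonal e, a p.1 * b p.2 ∉ P := by
  classical
  set i := Nat.find ha
  set j := Nat.find hb
  refine ⟨i + j, fun hmem => ?_⟩
  have hij : (i, j) ∈ antidiagonal (i + j) := mem_antidiagonal.2 rfl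
  have hrest : ∑ p ∈ (antidiagonal (i + j)).erase (i, j), a p.1 * b p.2 ∈ P := by
    refine P.sum_mem fun p hp => ?_
    rw [Finset.mem_erase, mem_antidiagonal] at hp
    rcases lt_or_ge p.1 i with h | h
    · exact P.mul_mem_right _ (not_not.1 (Nat.find_min ha h))
    · have : p.2 < j := by
        by_contra!
        exact hp.1 (Prod.ext (by omega) (by omega))
      exact P.mul_mem_left _ (not_not.1 (Nat.find_min hb this))
  rw [← Finset.add_sum_erase _ _ hij] at hmem
  rcases hP.mem_or_mem ((P.add_mem_iff_left hrest).1 hmem) with h | h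
  exacts [Nat.find_spec ha h, Nat.find_spec hb h]

namespace MvPolynomial

attribute [local instance] weightedGradedAlgebra

theorem isHomogeneous_span_of_isWeightedHomogeneous {σ R : Type*} [CommSemiring R] {w : σ → ℕ}
    {S : Set (MvPolynomial σ R)} (hS : ∀ t ∈ S, ∃ d, t.IsWeightedHomogeneous w d) :
    (Ideal.span S).IsHomogeneous (weightedHomogeneousSubmodule R w) :=
  Ideal.homogeneous_span _ S fun t ht =>
    let ⟨d, hd⟩ := hS t ht
    ⟨d, (mem_weightedHomogeneousSubmodule R w d t).2 hd⟩

end MvPolynomial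

namespace MvPowerSeries

variable {σ R : Type*} (w : σ → ℕ)

section CommSemiring

variable [CommSemiring R]

theorem weightedHomogeneousComponent_mul (e : ℕ) (f g : MvPowerSeries σ R) :
    weightedHomogeneousComponent w e (f * g) =
      ∑ p ∈ antidiagonal e,
        weightedHomogeneousComponent w p.1 f * weightedHomogeneousComponent w p.2 g := by
  classical
  ext d
  simp only [map_sum, coeff_mul, coeff_weightedHomogeneousComponent, ite_mul, mul_ite,
    zero_mul, mul_zero]
  rw [Finset.sum_comm, Finset.ite_sum_zero]
  refine Finset.sum_congr rfl fun y hy => ?_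
  rw [mem_antidiagonal] at hy
  have hxy (x : ℕ × ℕ) :
      (Finsupp.weight w y.2 = x.2 ∧ Finsupp.weight w y.1 = x.1) ↔
        (Finsupp.weight w y.1, Finsupp.weight w y.2) = x := by
    rw [Prod.ext_iff, and_comm, eq_comm, @eq_comm _ _ x.2]
  simp only [← ite_and, hxy, Finset.sum_ite_eq, mem_antidiagonal, ← map_add, hy]

theorem weightedHomogeneousComponent_coe (e : ℕ) (p : MvPolynomial σ R) :
    weightedHomogeneousComponent w e (p : MvPowerSeries σ R) =
      ↑(MvPolynomial.weightedHomogeneousComponent w e p) := by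
  ext m
  rw [coeff_weightedHomogeneousComponent, coeff_coe, coeff_coe,
    MvPolynomial.coeff_weightedHomogeneousComponent]

/-- The formal sum over `e` of the weight-`e` components of the polynomials `c e`. -/
noncomputable def weightedDiagonal (c : ℕ → MvPolynomial σ R) : MvPowerSeries σ R :=
  fun a => (c (Finsupp.weight w a)).coeff a

theorem coeff_weightedDiagonal (c : ℕ → MvPolynomial σ R) (a : σ →₀ ℕ) :
    coeff a (weightedDiagonal w c) = (c (Finsupp.weight w a)).coeff a :=
  rfl

variable {w} in
theorem coeff_weightedDiagonal_mul_coe {t : MvPolynomial σ R} {d : ℕ}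
    (ht : t.IsWeightedHomogeneous w d) (c : ℕ → MvPolynomial σ R) (m : σ →₀ ℕ) :
    coeff m (weightedDiagonal w (fun k => c (k + d)) * (t : MvPowerSeries σ R)) =
      (c (Finsupp.weight w m) * t).coeff m := by
  classical
  rw [coeff_mul, MvPolynomial.coeff_mul]
  refine Finset.sum_congr rfl fun p hp => ?_
  rw [mem_antidiagonal] at hp
  rw [coeff_coe]
  by_cases htp : t.coeff p.2 = 0
  · rw [htp, mul_zero, mul_zero]
  · -- the monomial `p.2` of `t` has weight `d`, so `weight p.1 + d = weight m`
    rw [coeff_weightedDiagonal, ← ht htp, ← map_add, hp]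

variable [Finite σ]

open Classical in
/-- The weight-`e` component as a polynomial, cut out of the truncation at exponent `e` in each
variable; for positive weights nothing is lost (`coe_weightedHomogeneousComponentPoly`). -/
noncomputable def weightedHomogeneousComponentPoly (e : ℕ) :
    MvPowerSeries σ R →ₗ[R] MvPolynomial σ R :=
  (MvPolynomial.weightedHomogeneousComponent w e).comp
    (trunc' R (Finsupp.equivFunOnFinite.symm fun _ => e))

variable {w}

theorem coe_weightedHomogeneousComponentPoly (hw : ∀ i, w i ≠ 0) (e : ℕ)
    (f : MvPowerSeries σ R) :
    (weightedHomogeneousComponentPoly w e f : MvPowerSeries σ R) =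
      weightedHomogeneousComponent w e f := by
  classical
  ext m
  rw [coeff_coe, weightedHomogeneousComponentPoly, LinearMap.comp_apply,
    MvPolynomial.coeff_weightedHomogeneousComponent, coeff_trunc',
    coeff_weightedHomogeneousComponent]
  split_ifs with hm hle <;> try rfl
  exact absurd (fun i => hm ▸ Finsupp.le_weight w (hw i) m) hle

theorem weightedHomogeneousComponentPoly_coe (hw : ∀ i, w i ≠ 0) (e : ℕ)
    (p : MvPolynomial σ R) :
    weightedHomogeneousComponentPoly w e (p : MvPowerSeries σ R) =
      MvPolynomial.weightedHomogeneousComponent w e p := by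
  rw [← MvPolynomial.coe_inj, coe_weightedHomogeneousComponentPoly hw,
    weightedHomogeneousComponent_coe]

theorem weightedHomogeneousComponentPoly_mul (hw : ∀ i, w i ≠ 0) (e : ℕ)
    (f g : MvPowerSeries σ R) :
    weightedHomogeneousComponentPoly w e (f * g) =
      ∑ p ∈ antidiagonal e,
        weightedHomogeneousComponentPoly w p.1 f * weightedHomogeneousComponentPoly w p.2 g := by
  rw [← MvPolynomial.coe_inj, coe_weightedHomogeneousComponentPoly hw,
    weightedHomogeneousComponent_mul, ← coeToMvPowerSeries.ringHom_apply, map_sum]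
  simp only [map_mul, coeToMvPowerSeries.ringHom_apply, coe_weightedHomogeneousComponentPoly hw]

theorem coeff_weightedHomogeneousComponentPoly_weight (hw : ∀ i, w i ≠ 0)
    (f : MvPowerSeries σ R) (m : σ →₀ ℕ) :
    (weightedHomogeneousComponentPoly w (Finsupp.weight w m) f).coeff m = coeff m f := by
  rw [← coeff_coe, coe_weightedHomogeneousComponentPoly hw, coeff_weightedHomogeneousComponent,
    if_pos rfl]

end CommSemiring

section Ideal

attribute [local instance] MvPolynomial.weightedGradedAlgebra

variable [CommRing R] [Finite σ] {w}

theorem weightedHomogeneousComponentPoly_mem_of_mem_map (hw : ∀ i, w i ≠ 0)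
    {I : Ideal (MvPolynomial σ R)} (hI : I.IsHomogeneous (weightedHomogeneousSubmodule R w))
    {f : MvPowerSeries σ R} (hf : f ∈ I.map coeToMvPowerSeries.ringHom) (e : ℕ) :
    weightedHomogeneousComponentPoly w e f ∈ I := by
  rw [Ideal.map, Ideal.span] at hf
  induction hf using Submodule.span_induction generalizing e with
  | mem x hx =>
    obtain ⟨p, hp, rfl⟩ := hx
    rw [coeToMvPowerSeries.ringHom_apply, weightedHomogeneousComponentPoly_coe hw]
    exact weightedHomogeneousComponent_mem_of_mem R w hI hp e
  | zero => simp
  | add x y _ _ hx hy => simpa using add_mem (hx e) (hy e)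
  | smul a x _ hx =>
    rw [smul_eq_mul, weightedHomogeneousComponentPoly_mul hw]
    exact I.sum_mem fun p _ => I.mul_mem_left _ (hx p.2)

theorem comap_map_coe_of_isHomogeneous (hw : ∀ i, w i ≠ 0)
    {I : Ideal (MvPolynomial σ R)} (hI : I.IsHomogeneous (weightedHomogeneousSubmodule R w)) :
    (I.map coeToMvPowerSeries.ringHom).comap coeToMvPowerSeries.ringHom = I := by
  refine le_antisymm (fun p hp => ?_) Ideal.le_comap_map
  rw [mem_iff_weightedHomogeneousComponent_mem R w hI]
  intro e
  rw [← weightedHomogeneousComponentPoly_coe hw]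
  exact weightedHomogeneousComponentPoly_mem_of_mem_map hw hI hp e

theorem mem_map_coe_span_of_forall_weightedHomogeneousComponentPoly_mem [IsNoetherianRing R]
    (hw : ∀ i, w i ≠ 0) {S : Set (MvPolynomial σ R)}
    (hS : ∀ t ∈ S, ∃ d, t.IsWeightedHomogeneous w d) {f : MvPowerSeries σ R}
    (hf : ∀ e, weightedHomogeneousComponentPoly w e f ∈ Ideal.span S) :
    f ∈ (Ideal.span S).map coeToMvPowerSeries.ringHom := by
  obtain ⟨T, hTS, hST⟩ :=
    (Submodule.fg_span_iff_fg_span_finset_subset S).1 (IsNoetherian.noetherian (Ideal.span S))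
  choose! d hd using hS
  rw [Ideal.span, hST] at hf
  choose c _ hc using fun e => Submodule.mem_span_finset.1 (hf e)
  have hf_eq :
      f = ∑ t ∈ T, weightedDiagonal w (fun k => c (k + d t) t) * (t : MvPowerSeries σ R) := by
    ext m
    rw [map_sum, ← coeff_weightedHomogeneousComponentPoly_weight hw, ← hc,
      MvPolynomial.coeff_sum]
    exact Finset.sum_congr rfl fun t ht =>
      (coeff_weightedDiagonal_mul_coe (hd t (hTS ht)) (c · t) m).symm
  rw [hf_eq]
  exact Ideal.sum_mem _ fun t ht =>
    Ideal.mul_mem_left _ _ (Ideal.mem_map_of_mem _ (Ideal.subset_span (hTS ht)))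

theorem mem_map_coe_span_iff [IsNoetherianRing R] (hw : ∀ i, w i ≠ 0)
    {S : Set (MvPolynomial σ R)} (hS : ∀ t ∈ S, ∃ d, t.IsWeightedHomogeneous w d)
    {f : MvPowerSeries σ R} :
    f ∈ (Ideal.span S).map coeToMvPowerSeries.ringHom ↔
      ∀ e, weightedHomogeneousComponentPoly w e f ∈ Ideal.span S :=
  ⟨weightedHomogeneousComponentPoly_mem_of_mem_map hw
      (isHomogeneous_span_of_isWeightedHomogeneous hS),
    mem_map_coe_span_of_forall_weightedHomogeneousComponentPoly_mem hw hS⟩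

theorem isPrime_map_coe_span [IsNoetherianRing R] (hw : ∀ i, w i ≠ 0)
    {S : Set (MvPolynomial σ R)} (hS : ∀ t ∈ S, ∃ d, t.IsWeightedHomogeneous w d)
    (hP : (Ideal.span S).IsPrime) :
    ((Ideal.span S).map coeToMvPowerSeries.ringHom).IsPrime := by
  refine ⟨fun htop => hP.ne_top ?_, fun {f g} hfg => ?_⟩
  · have h1 := (mem_map_coe_span_iff hw hS (f := 1)).1 (htop ▸ Submodule.mem_top) 0
    rwa [← map_one coeToMvPowerSeries.ringHom, coeToMvPowerSeries.ringHom_apply,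
      weightedHomogeneousComponentPoly_coe hw,
      (isWeightedHomogeneous_one R w).weightedHomogeneousComponent_same,
      ← Ideal.eq_top_iff_one] at h1
  · by_contra! h
    simp only [mem_map_coe_span_iff hw hS, not_forall] at h
    obtain ⟨e, he⟩ := hP.exists_sum_antidiagonal_mul_notMem h.1 h.2
    rw [mem_map_coe_span_iff hw hS] at hfg
    exact he (weightedHomogeneousComponentPoly_mul hw e f g ▸ hfg e)

end Ideal
end MvPowerSeries

theorem stmt5_general {n : ℕ} (w : Fin n → ℕ) (hw : ∀ i, 0 < w i)
    (S : Set (MvPolynomial (Fin n) ℂ))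
    (hS : ∀ f ∈ S, ∃ d : ℕ, MvPolynomial.IsWeightedHomogeneous w f d)
    (I : Ideal (MvPolynomial (Fin n) ℂ)) (hI : I = Ideal.span S)
    (φ : MvPolynomial (Fin n) ℂ →+* MvPowerSeries (Fin n) ℂ)
    (hφ : φ = MvPolynomial.coeToMvPowerSeries.ringHom)
    (K : Ideal (MvPowerSeries (Fin n) ℂ)) (hK : K = I.map φ) :
    IsDomain (MvPolynomial (Fin n) ℂ ⧸ I) ↔ IsDomain (MvPowerSeries (Fin n) ℂ ⧸ K) := by
  subst hI hφ hK
  have hw' : ∀ i, w i ≠ 0 := fun i => (hw i).ne'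
  rw [Ideal.Quotient.isDomain_iff_prime, Ideal.Quotient.isDomain_iff_prime]
  refine ⟨MvPowerSeries.isPrime_map_coe_span hw' hS, fun hK => ?_⟩
  rw [← MvPowerSeries.comap_map_coe_of_isHomogeneous hw'
    (isHomogeneous_span_of_isWeightedHomogeneous hS)]
  exact hK.comap _

/-- Let `n ≥ 1`, `w : Fin n → ℕ` a positive weight function, and `I` an
ideal of `R = ℂ[x₁,…,xₙ]` generated by `w`-weighted-homogeneous polynomials.  Let
`T = ℂ[[x₁,…,xₙ]]`, `φ : R → T` the canonical inclusion, and `K = I·T`.  Then `R/I` is an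
integral domain if and only if `T/K` is an integral domain. -/
theorem stmt5 {n : ℕ} (hn : 1 ≤ n) (w : Fin n → ℕ) (hw : ∀ i, 0 < w i)
    (S : Set (MvPolynomial (Fin n) ℂ))
    (hS : ∀ f ∈ S, ∃ d : ℕ, MvPolynomial.IsWeightedHomogeneous w f d)
    (I : Ideal (MvPolynomial (Fin n) ℂ)) (hI : I = Ideal.span S)
    (φ : MvPolynomial (Fin n) ℂ →+* MvPowerSeries (Fin n) ℂ)
    (hφ : φ = MvPolynomial.coeToMvPowerSeries.ringHom)
    (K : Ideal (MvPowerSeries (Fin n) ℂ)) (hK : K = I.map φ) :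
    IsDomain (MvPolynomial (Fin n) ℂ ⧸ I) ↔ IsDomain (MvPowerSeries (Fin n) ℂ ⧸ K) :=
  stmt5_general w hw S hS I hI φ hφ K hK
end

section
/- Let 𝔰𝔬𝔩₂ denote the complex Lie algebra of upper-triangular 2×2 complex matrices with trace zero, let V be a finite-dimensional complex vector space with m = dim_ℂ V, and let θ : 𝔰𝔬𝔩₂ → End(V) be a homomorphism of complex Lie algebras. Then there exist a constant c ∈ ℂ and a ℂ-linear functional λ : 𝔰𝔬𝔩₂ → ℂ such that det(θ(x)) = c · (λ(x))^m for every x ∈ 𝔰𝔬𝔩₂. -/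
/-!
If `⁅A, B⁆ = c • B` with `c ≠ 0`, conjugation by `exp (t • A)` fixes `A` and rescales `B` by
`exp (c * t)`, so `s ↦ det (a • A + s • B)` is constant on `s ≠ 0`; by continuity it equals its
value `a ^ m * det A` at `s = 0`. In `𝔰𝔬𝔩₂` every element is `a • H + b • E` with `⁅H, E⁆ = 2 • E`,
so `det (θ x) = det (θ H) * a ^ m`, where `a` is the upper-left entry of `x`.
-/

attribute [local instance 100] LieRing.ofAssociativeRing

def sol2 : LieSubalgebra ℂ (Matrix (Fin 2) (Fin 2) ℂ) where
  carrier := {M | M 1 0 = 0 ∧ M 0 0 + M 1 1 = 0}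
  zero_mem' := by simp
  add_mem' := by
    rintro a b ⟨ha1, ha2⟩ ⟨hb1, hb2⟩
    refine ⟨by simp [ha1, hb1], ?_⟩
    simp only [Matrix.add_apply]
    linear_combination ha2 + hb2
  smul_mem' := by
    rintro c a ⟨ha1, ha2⟩
    refine ⟨by simp [ha1], ?_⟩
    simp only [Matrix.smul_apply, smul_eq_mul]
    linear_combination c * ha2
  lie_mem' := by
    rintro x y ⟨hx1, hx2⟩ ⟨hy1, hy2⟩
    constructor
    · simp [Ring.lie_def, Matrix.sub_apply, Matrix.mul_apply, Fin.sum_univ_two, hx1, hy1]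
    · simp only [Ring.lie_def, Matrix.sub_apply, Matrix.mul_apply, Fin.sum_univ_two,
        hx1, hy1]
      ring

namespace Matrix

open NormedSpace

variable {n : Type*} [Fintype n] [DecidableEq n] {A B : Matrix n n ℂ} {c : ℂ}

attribute [local instance] Matrix.linftyOpNormedRing Matrix.linftyOpNormedAlgebra

theorem exp_smul_mul_of_lie_eq_smul (h : ⁅A, B⁆ = c • B) (t : ℂ) :
    exp (t • A) * B = Complex.exp (c * t) • (B * exp (t • A)) := by
  have hsemi : SemiconjBy B (t • A + algebraMap ℂ _ (c * t)) (t • A) := by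
    rw [Ring.lie_def, sub_eq_iff_eq_add] at h
    simp only [SemiconjBy, Algebra.algebraMap_eq_smul_one, mul_add, mul_smul_comm, mul_one,
      smul_mul_assoc, h, smul_add, smul_smul, mul_comm c t]
    exact add_comm _ _
  refine hsemi.exp_right.eq.symm.trans ?_
  rw [NormedSpace.exp_add_of_commute (Algebra.commutes _ _).symm,
    ← algebraMap_exp_comm, Algebra.algebraMap_eq_smul_one, mul_smul_comm, mul_one, mul_smul_comm,
    ← Complex.exp_eq_exp_ℂ]
  -- the sides differ only in the (defeq) choice of ring structure on matrices
  rfl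

theorem det_smul_add_exp_mul_smul_of_lie_eq_smul (h : ⁅A, B⁆ = c • B) (a b t : ℂ) :
    det (a • A + (Complex.exp (c * t) * b) • B) = det (a • A + b • B) := by
  have hU : exp (t • A) * (a • A + b • B) =
      (a • A + (Complex.exp (c * t) * b) • B) * exp (t • A) := by
    rw [mul_add, mul_smul_comm, mul_smul_comm, ((Commute.refl A).smul_left t).exp_left.eq,
      exp_smul_mul_of_lie_eq_smul h, smul_smul, add_mul, smul_mul_assoc, smul_mul_assoc, mul_comm b]
  have hdet : IsUnit (exp (t • A)).det := (Matrix.isUnit_exp _).map detMonoidHom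
  have := congrArg det hU
  rw [det_mul, det_mul, mul_comm] at this
  exact (hdet.mul_right_cancel this).symm

theorem det_smul_add_smul_of_lie_eq_smul (hc : c ≠ 0) (h : ⁅A, B⁆ = c • B) (a b : ℂ) :
    det (a • A + b • B) = a ^ Fintype.card n * det A := by
  set f : ℂ → ℂ := fun s => det (a • A + s • B)
  have hf : Continuous f := (continuous_const.add (continuous_id.smul continuous_const)).matrix_det
  have hconst : ∀ s ≠ 0, f s = f 1 := fun s hs => by
    have hexp : Complex.exp (c * (Complex.log s / c)) * 1 = s := by
      rw [mul_div_cancel₀ _ hc, Complex.exp_log hs, mul_one]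
    simpa only [f, hexp] using det_smul_add_exp_mul_smul_of_lie_eq_smul h a 1 (Complex.log s / c)
  have hf_eq : f = fun _ => f 1 :=
    Continuous.ext_on (dense_compl_singleton 0) hf continuous_const hconst
  calc f b = f 0 := by rw [hf_eq]
    _ = a ^ Fintype.card n * det A := by simp [f]

end Matrix

theorem LinearMap.det_smul_add_smul_of_lie_eq_smul {V : Type*} [AddCommGroup V] [Module ℂ V]
    [FiniteDimensional ℂ V] {f g : Module.End ℂ V} {c : ℂ} (hc : c ≠ 0) (h : ⁅f, g⁆ = c • g)
    (a b : ℂ) : LinearMap.det (a • f + b • g) = a ^ Module.finrank ℂ V * LinearMap.det f := by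
  let bV := Module.finBasis ℂ V
  let φ := toMatrixAlgEquiv bV
  have hφ : ⁅φ f, φ g⁆ = c • φ g := by
    rw [Ring.lie_def, ← map_mul, ← map_mul, ← map_sub, ← Ring.lie_def, h, map_smul]
  have := Matrix.det_smul_add_smul_of_lie_eq_smul hc hφ a b
  rw [← map_smul φ, ← map_smul φ, ← map_add] at this
  change (toMatrix bV bV _).det = _ * (toMatrix bV bV f).det at this
  rwa [det_toMatrix, det_toMatrix, Fintype.card_fin] at this

namespace sol2

def H : sol2 := ⟨!![1, 0; 0, -1], by simp [sol2]⟩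

def E : sol2 := ⟨!![0, 1; 0, 0], by simp [sol2]⟩

def diagEntry : sol2 →ₗ[ℂ] ℂ where
  toFun x := (x : Matrix (Fin 2) (Fin 2) ℂ) 0 0
  map_add' _ _ := rfl
  map_smul' _ _ := rfl

@[simp]
theorem diagEntry_apply (x : sol2) : diagEntry x = (x : Matrix (Fin 2) (Fin 2) ℂ) 0 0 := rfl

theorem lie_H_E : ⁅H, E⁆ = (2 : ℂ) • E := by
  ext i j
  fin_cases i <;> fin_cases j <;> norm_num [H, E, Ring.lie_def]

theorem eq_smul_H_add_smul_E (x : sol2) : x = diagEntry x • H + x.1 0 1 • E := by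
  obtain ⟨hx10, htr⟩ := x.2
  ext i j
  fin_cases i <;> fin_cases j <;> simp [H, E, hx10]
  linear_combination htr

end sol2

/-- For any finite-dimensional complex representation
`θ : 𝔰𝔬𝔩₂ → End(V)` with `m = dim V`, there are `c ∈ ℂ` and a linear functional
`λ : 𝔰𝔬𝔩₂ → ℂ` with `det (θ x) = c * (λ x) ^ m` for all `x`. -/
theorem stmt7 {V : Type*} [AddCommGroup V] [Module ℂ V] [FiniteDimensional ℂ V]
    (m : ℕ) (hm : m = Module.finrank ℂ V)
    (θ : sol2 →ₗ⁅ℂ⁆ Module.End ℂ V) :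
    ∃ (c : ℂ) (lam : sol2 →ₗ[ℂ] ℂ),
      ∀ x : sol2, LinearMap.det (θ x) = c * lam x ^ m := by
  have hθ : ⁅θ sol2.H, θ sol2.E⁆ = (2 : ℂ) • θ sol2.E := by
    rw [← LieHom.map_lie, sol2.lie_H_E, map_smul]
  refine ⟨LinearMap.det (θ sol2.H), sol2.diagEntry, fun x => ?_⟩
  conv_lhs => rw [sol2.eq_smul_H_add_smul_E x, map_add, map_smul, map_smul,
    LinearMap.det_smul_add_smul_of_lie_eq_smul two_ne_zero hθ]
  rw [hm, mul_comm]
end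

section
/- Let n ≥ 3 and g ≥ 1. Let L be the free complex Lie algebra on the 2g generators a₁, b₁, …, a_g, b_g, and set r = Σ_{i=1}^{g} ⁅a_i, b_i⁆ ∈ L. Then there exists a Lie algebra homomorphism ρ : L → 𝔰𝔩_n(ℂ) such that ρ(r) ≠ 0 while ρ(⁅a_i, r⁆) = 0 and ρ(⁅b_i, r⁆) = 0 for every i = 1, …, g. -/
/-!
Send `a₁ ↦ x`, `b₁ ↦ y` and all other generators to `0`. Then `r ↦ ⁅x, y⁆`, while `⁅aᵢ, r⁆` and
`⁅bᵢ, r⁆` go to `⁅x, ⁅x, y⁆⁆`, `⁅y, ⁅x, y⁆⁆` or `0`. So it suffices to find a Heisenberg triple in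
`𝔰𝔩ₙ`: `x = E₁₂`, `y = E₂₃`, whose bracket `E₁₃ ≠ 0` commutes with both; this needs three distinct
indices, i.e. `n ≥ 3`.
-/

namespace FreeLieAlgebra

variable (R : Type*) [CommRing R] (ι : Type*) [Fintype ι]

noncomputable def surfaceRelator : FreeLieAlgebra R (ι ⊕ ι) :=
  ∑ i, ⁅of R (Sum.inl i : ι ⊕ ι), of R (Sum.inr i)⁆

variable {R ι} {M : Type*} [LieRing M] [LieAlgebra R M] [DecidableEq ι]

theorem lift_single_surfaceRelator (i₀ : ι) (x y : M) :
    lift R (Sum.elim (Pi.single i₀ x) (Pi.single i₀ y)) (surfaceRelator R ι) = ⁅x, y⁆ := by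
  simp [surfaceRelator, map_sum, lift_of_apply, Pi.single_apply, apply_ite₂]

theorem exists_lieHom_surfaceRelator (i₀ : ι) {x y : M}
    (hx : ⁅x, ⁅x, y⁆⁆ = 0) (hy : ⁅y, ⁅x, y⁆⁆ = 0) :
    ∃ ρ : FreeLieAlgebra R (ι ⊕ ι) →ₗ⁅R⁆ M, ρ (surfaceRelator R ι) = ⁅x, y⁆ ∧
      ∀ i, ρ ⁅of R (Sum.inl i : ι ⊕ ι), surfaceRelator R ι⁆ = 0 ∧
        ρ ⁅of R (Sum.inr i : ι ⊕ ι), surfaceRelator R ι⁆ = 0 := by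
  refine ⟨_, lift_single_surfaceRelator i₀ x y, fun i ↦ ?_⟩
  simp only [LieHom.map_lie, lift_single_surfaceRelator, lift_of_apply, Sum.elim_inl,
    Sum.elim_inr]
  by_cases hi : i = i₀
  · subst hi; simp [hx, hy]
  · simp [hi]

end FreeLieAlgebra

namespace LieAlgebra.SpecialLinear

variable {R n : Type*} [CommRing R] [Fintype n] [DecidableEq n]

theorem single_lie_single_same {i j k : n} (hij : i ≠ j) (hjk : j ≠ k) (hik : i ≠ k)
    (c d : R) :
    ⁅single i j hij c, single j k hjk d⁆ = single i k hik (c * d) := by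
  ext : 1
  simp [Ring.lie_def, Matrix.single_mul_single_of_ne _ _ _ _ hik.symm]

theorem single_lie_single_of_ne {i j k l : n} (hij : i ≠ j) (hkl : k ≠ l) (hjk : j ≠ k)
    (hli : l ≠ i) (c d : R) : ⁅single i j hij c, single k l hkl d⁆ = 0 := by
  ext : 1
  simp [Ring.lie_def, Matrix.single_mul_single_of_ne _ _ _ _ hjk,
    Matrix.single_mul_single_of_ne _ _ _ _ hli]

theorem single_ne_zero {i j : n} (hij : i ≠ j) {c : R} (hc : c ≠ 0) : single i j hij c ≠ 0 :=
  fun h ↦ hc <| by simpa using congrFun (congrFun (congrArg Subtype.val h) i) j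

theorem exists_heisenberg_triple [Nontrivial R] {i j k : n} (hij : i ≠ j) (hjk : j ≠ k)
    (hik : i ≠ k) :
    ∃ x y : sl n R, ⁅x, y⁆ ≠ 0 ∧ ⁅x, ⁅x, y⁆⁆ = 0 ∧ ⁅y, ⁅x, y⁆⁆ = 0 := by
  refine ⟨single i j hij 1, single j k hjk 1, ?_⟩
  rw [single_lie_single_same hij hjk hik, mul_one]
  exact ⟨single_ne_zero hik one_ne_zero, single_lie_single_of_ne _ _ hij.symm hik.symm _ _,
    single_lie_single_of_ne _ _ hik.symm hjk.symm _ _⟩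

end LieAlgebra.SpecialLinear

open FreeLieAlgebra LieAlgebra.SpecialLinear

/-- Let `n ≥ 3`, `g ≥ 1`, let `L` be the free complex Lie algebra on
generators `a₁, b₁, …, a_g, b_g` (indexed by `Fin g ⊕ Fin g`), and let
`r = Σᵢ ⁅aᵢ, bᵢ⁆`.  Then there is a Lie algebra homomorphism `ρ : L → 𝔰𝔩ₙ(ℂ)` with
`ρ r ≠ 0` and `ρ ⁅aᵢ, r⁆ = 0`, `ρ ⁅bᵢ, r⁆ = 0` for all `i`. -/
theorem stmt9 (n g : ℕ) (hn : 3 ≤ n) (hg : 1 ≤ g)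
    (a b : Fin g → FreeLieAlgebra ℂ (Fin g ⊕ Fin g))
    (ha : ∀ i, a i = FreeLieAlgebra.of ℂ (Sum.inl i))
    (hb : ∀ i, b i = FreeLieAlgebra.of ℂ (Sum.inr i))
    (r : FreeLieAlgebra ℂ (Fin g ⊕ Fin g))
    (hr : r = ∑ i : Fin g, ⁅a i, b i⁆) :
    ∃ ρ : FreeLieAlgebra ℂ (Fin g ⊕ Fin g) →ₗ⁅ℂ⁆ LieAlgebra.SpecialLinear.sl (Fin n) ℂ,
      ρ r ≠ 0 ∧ ∀ i : Fin g, ρ ⁅a i, r⁆ = 0 ∧ ρ ⁅b i, r⁆ = 0 := by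
  obtain ⟨x, y, hxy, hx, hy⟩ := exists_heisenberg_triple (R := ℂ)
    (i := (⟨0, by omega⟩ : Fin n)) (j := ⟨1, by omega⟩) (k := ⟨2, by omega⟩)
    (by simp [Fin.ext_iff]) (by simp [Fin.ext_iff]) (by simp [Fin.ext_iff])
  obtain ⟨ρ, hρr, hρ⟩ := exists_lieHom_surfaceRelator (R := ℂ) (⟨0, hg⟩ : Fin g) hx hy
  have hr : r = surfaceRelator ℂ (Fin g) := by simp only [hr, ha, hb, surfaceRelator]
  refine ⟨ρ, by rwa [hr, hρr], fun i ↦ ?_⟩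
  rw [ha, hb, hr]
  exact hρ i
end
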